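/- Tree Recognition: let G be an input graph for the tree-recognition system. Then G has a normal form, and for every normal form H of G (G ⇒*_𝓡 H with no rule of 𝓡 applicable to H): H is isomorphic to the single-node graph whose node is rooted and labelled □ and which has no edges, if and only if G is a tree. -/

import Mathlib

/-! # Rooted graph transformation with relabelling -/

/-- A graph over a label alphabet `(LV, LE)`: finite vertex and edge sets, total
source/target functions, a partial node-labelling function `l`, a total
edge-labelling function `m`, and a partial rootedness function `p`
(`some true` = root node, `some false` = non-root, `none` = undefined). -/
structure RGraph (LV LE : Type) : Type 1 where
  V : Type
  E : Type
  finV : Finite V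
  finE : Finite E
  s : E → V
  t : E → V
  l : V → Option LV
  m : E → LE
  p : V → Option Bool

namespace RGraph

variable {LV LE : Type}

def IsTotallyLabelled (G : RGraph LV LE) : Prop := ∀ v, (G.l v).isSome
def IsTotallyRooted (G : RGraph LV LE) : Prop := ∀ v, (G.p v).isSome
/-- totally labelled, totally rooted graph -/
def IsTLRG (G : RGraph LV LE) : Prop := G.IsTotallyLabelled ∧ G.IsTotallyRooted

/-- The number of root nodes `|p⁻¹({1})|`. -/
noncomputable def rootCount (G : RGraph LV LE) : ℕ := Nat.card {v : G.V // G.p v = some true}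

/-- The degree of a node. -/
noncomputable def degree (G : RGraph LV LE) (v : G.V) : ℕ :=
  Nat.card {e : G.E // G.s e = v} + Nat.card {e : G.E // G.t e = v}

end RGraph

/-- Graph morphisms preserve sources, targets, edge labels, and node labels and
rootedness wherever these are defined. -/
structure Morphism {LV LE : Type} (G H : RGraph LV LE) : Type where
  fV : G.V → H.V
  fE : G.E → H.E
  src : ∀ e, fV (G.s e) = H.s (fE e)
  tgt : ∀ e, fV (G.t e) = H.t (fE e)
  edgeLabel : ∀ e, G.m e = H.m (fE e)
  nodeLabel : ∀ v x, G.l v = some x → H.l (fV v) = some x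
  rootedness : ∀ v b, G.p v = some b → H.p (fV v) = some b

namespace Morphism

variable {LV LE : Type} {G H K : RGraph LV LE}

def Injective (g : Morphism G H) : Prop := Function.Injective g.fV ∧ Function.Injective g.fE

/-- identity morphism -/
def ident (G : RGraph LV LE) : Morphism G G where
  fV := id
  fE := id
  src := fun _ => rfl
  tgt := fun _ => rfl
  edgeLabel := fun _ => rfl
  nodeLabel := fun _ _ h => h
  rootedness := fun _ _ h => h

/-- composition of morphisms -/
def comp (g : Morphism G H) (h : Morphism H K) : Morphism G K where
  fV := h.fV ∘ g.fV
  fE := h.fE ∘ g.fE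
  src := fun e => by simp [Function.comp, g.src e, h.src (g.fE e)]
  tgt := fun e => by simp [Function.comp, g.tgt e, h.tgt (g.fE e)]
  edgeLabel := fun e => by simp [Function.comp, ← h.edgeLabel (g.fE e), g.edgeLabel e]
  nodeLabel := fun v x hx => h.nodeLabel _ _ (g.nodeLabel v x hx)
  rootedness := fun v b hb => h.rootedness _ _ (g.rootedness v b hb)

end Morphism

/-- An isomorphism of graphs: a morphism with a two-sided inverse morphism. -/
structure Iso {LV LE : Type} (G H : RGraph LV LE) : Type where
  toMor : Morphism G H
  invMor : Morphism H G
  leftV : ∀ v, invMor.fV (toMor.fV v) = v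
  leftE : ∀ e, invMor.fE (toMor.fE e) = e
  rightV : ∀ v, toMor.fV (invMor.fV v) = v
  rightE : ∀ e, toMor.fE (invMor.fE e) = e

/-- A rule `⟨L ← K → R⟩`: graphs `L`, `K`, `R` together with inclusion
(injective) morphisms `K ↪ L` and `K ↪ R`.  (In the rooted relabelling setting
`L` and `R` are additionally required to be TLRGs; this requirement is stated
as a hypothesis where needed.) -/
structure Rule (LV LE : Type) : Type 1 where
  L : RGraph LV LE
  K : RGraph LV LE
  R : RGraph LV LE
  incL : Morphism K L
  incR : Morphism K R
  injL : incL.Injective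
  injR : incR.Injective

namespace Rule

variable {LV LE : Type} (r : Rule LV LE) (G : RGraph LV LE)

/-- The inverse rule `r⁻¹ = ⟨R ← K → L⟩`. -/
def inv (r : Rule LV LE) : Rule LV LE where
  L := r.R
  K := r.K
  R := r.L
  incL := r.incR
  incR := r.incL
  injL := r.injR
  injR := r.injL

/-- The dangling condition: no edge of `G ∖ g(L)` is incident to a node of `g(L ∖ K)`. -/
def Dangling (g : Morphism r.L G) : Prop :=
  ∀ e : G.E, (∀ e' : r.L.E, g.fE e' ≠ e) →
    ∀ v : r.L.V, (∀ k : r.K.V, r.incL.fV k ≠ v) →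
      G.s e ≠ g.fV v ∧ G.t e ≠ g.fV v

/-- The match `g` is applicable: it is injective and satisfies the dangling condition. -/
def Applicable (g : Morphism r.L G) : Prop := g.Injective ∧ r.Dangling G g

/-- the nodes `g(L ∖ K)` deleted by applying `r` via `g` -/
def DelV (g : Morphism r.L G) : Set G.V :=
  {x | ∃ v : r.L.V, (∀ k : r.K.V, r.incL.fV k ≠ v) ∧ g.fV v = x}

/-- the edges `g(L ∖ K)` deleted by applying `r` via `g` -/
def DelE (g : Morphism r.L G) : Set G.E :=
  {x | ∃ e : r.L.E, (∀ k : r.K.E, r.incL.fE k ≠ e) ∧ g.fE e = x}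

theorem kept_incL {g : Morphism r.L G} (hinj : g.Injective) (k : r.K.V) :
    g.fV (r.incL.fV k) ∉ r.DelV G g := by
  rintro ⟨v, hv, heq⟩
  exact hv k (hinj.1 heq).symm

theorem kept_src {g : Morphism r.L G} (h : r.Applicable G g) {e : G.E}
    (he : e ∉ r.DelE G g) : G.s e ∉ r.DelV G g := by
  rintro ⟨v, hv, heq⟩
  by_cases hc : ∃ e', g.fE e' = e
  · obtain ⟨e', rfl⟩ := hc
    by_cases hk : ∃ k, r.incL.fE k = e'
    · obtain ⟨k, rfl⟩ := hk
      have h1 : g.fV (r.L.s (r.incL.fE k)) = G.s (g.fE (r.incL.fE k)) := g.src _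
      have h2 : r.incL.fV (r.K.s k) = r.L.s (r.incL.fE k) := r.incL.src k
      have h3 : g.fV v = g.fV (r.incL.fV (r.K.s k)) := by rw [heq, h2, h1]
      exact hv _ (h.1.1 h3).symm
    · exact he ⟨e', fun k hk' => hk ⟨k, hk'⟩, rfl⟩
  · exact (h.2 e (fun e' he' => hc ⟨e', he'⟩) v hv).1 heq.symm

theorem kept_tgt {g : Morphism r.L G} (h : r.Applicable G g) {e : G.E}
    (he : e ∉ r.DelE G g) : G.t e ∉ r.DelV G g := by
  rintro ⟨v, hv, heq⟩
  by_cases hc : ∃ e', g.fE e' = e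
  · obtain ⟨e', rfl⟩ := hc
    by_cases hk : ∃ k, r.incL.fE k = e'
    · obtain ⟨k, rfl⟩ := hk
      have h1 : g.fV (r.L.t (r.incL.fE k)) = G.t (g.fE (r.incL.fE k)) := g.tgt _
      have h2 : r.incL.fV (r.K.t k) = r.L.t (r.incL.fE k) := r.incL.tgt k
      have h3 : g.fV v = g.fV (r.incL.fV (r.K.t k)) := by rw [heq, h2, h1]
      exact hv _ (h.1.1 h3).symm
    · exact he ⟨e', fun k hk' => hk ⟨k, hk'⟩, rfl⟩
  · exact (h.2 e (fun e' he' => hc ⟨e', he'⟩) v hv).2 heq.symm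

attribute [local instance] Classical.propDecidable

/-- The result graph of applying `r` to `G` via an applicable match `g`:
delete `g(L ∖ K)` (undefining labels/rootedness of images of interface nodes
where they are undefined in `K`), then add `R ∖ K` disjointly, relabelling
(and re-rooting) the images of interface nodes according to `R`. -/
noncomputable def result (g : Morphism r.L G) (h : r.Applicable G g) : RGraph LV LE where
  V := {x : G.V // x ∉ r.DelV G g} ⊕ {v : r.R.V // ∀ k, r.incR.fV k ≠ v}
  E := {x : G.E // x ∉ r.DelE G g} ⊕ {e : r.R.E // ∀ k, r.incR.fE k ≠ e}
  finV := by
    haveI := G.finV; haveI := r.R.finV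
    infer_instance
  finE := by
    haveI := G.finE; haveI := r.R.finE
    infer_instance
  s := fun e =>
    match e with
    | Sum.inl x => Sum.inl ⟨G.s x.1, r.kept_src G h x.2⟩
    | Sum.inr x =>
        if hk : ∃ k, r.incR.fV k = r.R.s x.1 then
          Sum.inl ⟨g.fV (r.incL.fV hk.choose), r.kept_incL G h.1 _⟩
        else Sum.inr ⟨r.R.s x.1, fun k hk' => hk ⟨k, hk'⟩⟩
  t := fun e =>
    match e with
    | Sum.inl x => Sum.inl ⟨G.t x.1, r.kept_tgt G h x.2⟩
    | Sum.inr x =>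
        if hk : ∃ k, r.incR.fV k = r.R.t x.1 then
          Sum.inl ⟨g.fV (r.incL.fV hk.choose), r.kept_incL G h.1 _⟩
        else Sum.inr ⟨r.R.t x.1, fun k hk' => hk ⟨k, hk'⟩⟩
  l := fun v =>
    match v with
    | Sum.inl x =>
        if hk : ∃ k : r.K.V, r.K.l k = none ∧ g.fV (r.incL.fV k) = x.1 then
          r.R.l (r.incR.fV hk.choose)
        else G.l x.1
    | Sum.inr v => r.R.l v.1
  m := fun e =>
    match e with
    | Sum.inl x => G.m x.1
    | Sum.inr x => r.R.m x.1
  p := fun v =>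
    match v with
    | Sum.inl x =>
        if hk : ∃ k : r.K.V, r.K.p k = none ∧ g.fV (r.incL.fV k) = x.1 then
          r.R.p (r.incR.fV hk.choose)
        else G.p x.1
    | Sum.inr v => r.R.p v.1

/-- Direct derivation `G ⇒_r M`: there is an applicable match `g` such that `M`
is isomorphic to the result of applying `r` to `G` via `g`. -/
def Deriv (r : Rule LV LE) (G M : RGraph LV LE) : Prop :=
  ∃ (g : Morphism r.L G) (h : r.Applicable G g), Nonempty (Iso (r.result G g h) M)

end Rule

/-- `G ⇒_𝓡 H` for a set of rules. -/
def GTStep {LV LE : Type} (Rs : Set (Rule LV LE)) (G H : RGraph LV LE) : Prop :=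
  ∃ r ∈ Rs, r.Deriv G H

/-- `G ⇒*_𝓡 H`: the reflexive-transitive closure of `⇒_𝓡`, up to isomorphism. -/
def GTDerivStar {LV LE : Type} (Rs : Set (Rule LV LE)) (G H : RGraph LV LE) : Prop :=
  Relation.ReflTransGen (GTStep Rs) G H ∨ Nonempty (Iso G H)
/-! ## The tree-recognition system -/

/-- node labels: `□` (square) and `△` (triangle) -/
inductive NodeLab : Type where
  | square : NodeLab
  | tri : NodeLab
deriving DecidableEq

/-- `L` of rule `r0`: `v1 --□--> v2`, both `□`-labelled, `v1` unrooted, `v2` rooted. -/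
abbrev L0 : RGraph NodeLab Unit where
  V := Fin 2
  E := Unit
  finV := inferInstance
  finE := inferInstance
  s := fun _ => 0
  t := fun _ => 1
  l := fun _ => some .square
  m := fun _ => ()
  p := ![some false, some true]

/-- `K` of rules `r0` and `r1`: the single node `v1`, unlabelled, rootedness undefined. -/
abbrev K0 : RGraph NodeLab Unit where
  V := Unit
  E := PEmpty
  finV := inferInstance
  finE := inferInstance
  s := PEmpty.elim
  t := PEmpty.elim
  l := fun _ => none
  m := PEmpty.elim
  p := fun _ => none

/-- `R` of rules `r0` and `r1`: the single node `v1`, labelled `□`, rooted. -/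
abbrev R0 : RGraph NodeLab Unit where
  V := Unit
  E := PEmpty
  finV := inferInstance
  finE := inferInstance
  s := PEmpty.elim
  t := PEmpty.elim
  l := fun _ => some .square
  m := PEmpty.elim
  p := fun _ => some true

def incL0 : Morphism K0 L0 where
  fV := fun _ => 0
  fE := PEmpty.elim
  src := fun e => e.elim
  tgt := fun e => e.elim
  edgeLabel := fun e => e.elim
  nodeLabel := fun _ _ h => nomatch h
  rootedness := fun _ _ h => nomatch h

def incR0 : Morphism K0 R0 where
  fV := id
  fE := PEmpty.elim
  src := fun e => e.elim
  tgt := fun e => e.elim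
  edgeLabel := fun e => e.elim
  nodeLabel := fun _ _ h => nomatch h
  rootedness := fun _ _ h => nomatch h

/-- rule `r0`: prune a rooted `□`-leaf with unrooted `□`-parent, root moves to the parent -/
def r0 : Rule NodeLab Unit where
  L := L0
  K := K0
  R := R0
  incL := incL0
  incR := incR0
  injL := ⟨Function.injective_of_subsingleton _, Function.injective_of_subsingleton _⟩
  injR := ⟨Function.injective_of_subsingleton _, Function.injective_of_subsingleton _⟩

/-- `L` of rule `r1`: like `L0` but `v1` is labelled `△`. -/
abbrev L1 : RGraph NodeLab Unit where
  V := Fin 2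
  E := Unit
  finV := inferInstance
  finE := inferInstance
  s := fun _ => 0
  t := fun _ => 1
  l := ![some .tri, some .square]
  m := fun _ => ()
  p := ![some false, some true]

def incL1 : Morphism K0 L1 where
  fV := fun _ => 0
  fE := PEmpty.elim
  src := fun e => e.elim
  tgt := fun e => e.elim
  edgeLabel := fun e => e.elim
  nodeLabel := fun _ _ h => nomatch h
  rootedness := fun _ _ h => nomatch h

/-- rule `r1`: prune a rooted `□`-leaf with unrooted `△`-parent, root moves to the
parent which becomes `□`-labelled -/
def r1 : Rule NodeLab Unit where
  L := L1
  K := K0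
  R := R0
  incL := incL1
  incR := incR0
  injL := ⟨Function.injective_of_subsingleton _, Function.injective_of_subsingleton _⟩
  injR := ⟨Function.injective_of_subsingleton _, Function.injective_of_subsingleton _⟩

/-- `L` of rule `r2`: `v1 --□--> v2`, both `□`-labelled, `v1` rooted, `v2` unrooted. -/
abbrev L2 : RGraph NodeLab Unit where
  V := Fin 2
  E := Unit
  finV := inferInstance
  finE := inferInstance
  s := fun _ => 0
  t := fun _ => 1
  l := fun _ => some .square
  m := fun _ => ()
  p := ![some true, some false]

/-- `K` of rule `r2`: nodes `v1, v2`, unlabelled, rootedness undefined, no edges. -/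
abbrev K2 : RGraph NodeLab Unit where
  V := Fin 2
  E := PEmpty
  finV := inferInstance
  finE := inferInstance
  s := PEmpty.elim
  t := PEmpty.elim
  l := fun _ => none
  m := PEmpty.elim
  p := fun _ => none

/-- `R` of rule `r2`: `v1 --□--> v2`, `v1` labelled `△` and unrooted, `v2` labelled `□`
and rooted. -/
abbrev R2 : RGraph NodeLab Unit where
  V := Fin 2
  E := Unit
  finV := inferInstance
  finE := inferInstance
  s := fun _ => 0
  t := fun _ => 1
  l := ![some .tri, some .square]
  m := fun _ => ()
  p := ![some false, some true]

def incL2 : Morphism K2 L2 where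
  fV := id
  fE := PEmpty.elim
  src := fun e => e.elim
  tgt := fun e => e.elim
  edgeLabel := fun e => e.elim
  nodeLabel := fun _ _ h => nomatch h
  rootedness := fun _ _ h => nomatch h

def incR2 : Morphism K2 R2 where
  fV := id
  fE := PEmpty.elim
  src := fun e => e.elim
  tgt := fun e => e.elim
  edgeLabel := fun e => e.elim
  nodeLabel := fun _ _ h => nomatch h
  rootedness := fun _ _ h => nomatch h

/-- rule `r2`: push the root one step down an edge, marking the old position `△` -/
def r2 : Rule NodeLab Unit where
  L := L2
  K := K2
  R := R2
  incL := incL2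
  incR := incR2
  injL := ⟨Function.injective_id, Function.injective_of_subsingleton _⟩
  injR := ⟨Function.injective_id, Function.injective_of_subsingleton _⟩

/-- the rule set of the tree-recognition system -/
def TreeRules : Set (Rule NodeLab Unit) := {r0, r1, r2}

/-! ## Trees -/

/-- `IsUndirWalk G v l w`: `l` is an undirected walk from `v` to `w` in `G`;
each step is an edge together with a boolean telling in which direction it is
traversed. -/
def IsUndirWalk {LV LE : Type} (G : RGraph LV LE) : G.V → List (G.E × Bool) → G.V → Prop
  | v, [], w => v = w
  | v, (e, true) :: rest, w => G.s e = v ∧ IsUndirWalk G (G.t e) rest w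
  | v, (e, false) :: rest, w => G.t e = v ∧ IsUndirWalk G (G.s e) rest w

/-- connectedness via undirected walks -/
def IsConnectedGraph {LV LE : Type} (G : RGraph LV LE) : Prop :=
  ∀ v w : G.V, ∃ l, IsUndirWalk G v l w

/-- an undirected cycle: a non-empty closed undirected walk without repeated edges -/
def HasUndirCycle {LV LE : Type} (G : RGraph LV LE) : Prop :=
  ∃ (v : G.V) (l : List (G.E × Bool)), l ≠ [] ∧ IsUndirWalk G v l v ∧ (l.map Prod.fst).Nodup

/-- a tree: non-empty, connected, no undirected cycles, and every node has at
most one incoming edge -/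
def IsTree {LV LE : Type} (G : RGraph LV LE) : Prop :=
  Nonempty G.V ∧ IsConnectedGraph G ∧ ¬ HasUndirCycle G ∧
    ∀ v : G.V, Nat.card {e : G.E // G.t e = v} ≤ 1

/-- an input graph: a TLRG with exactly one root node, all nodes labelled `□`
(all edges are `□`-labelled since `Unit` is the edge alphabet) -/
def IsInputGraph (G : RGraph NodeLab Unit) : Prop :=
  G.IsTLRG ∧ (∀ v, G.l v = some .square) ∧ G.rootCount = 1

/-- no rule of `Rs` is applicable to `H` -/
def InNormalForm {LV LE : Type} (Rs : Set (Rule LV LE)) (H : RGraph LV LE) : Prop :=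
  ¬ ∃ r ∈ Rs, ∃ g : Morphism r.L H, r.Applicable H g

/-- the single-node graph: one rooted node labelled `□`, no edges -/
abbrev singleRootGraph : RGraph NodeLab Unit where
  V := Unit
  E := PEmpty
  finV := inferInstance
  finE := inferInstance
  s := PEmpty.elim
  t := PEmpty.elim
  l := fun _ => some .square
  m := PEmpty.elim
  p := fun _ => some true


/-!
The system terminates because `r0` and `r1` delete a node and `r2` turns a `□` into a `△`, so
`|V|² + #□` decreases. Tree-ness is preserved by every step: `r0` and `r1` delete a leaf together
with its only edge, and `r2` only relabels. Along a derivation from an input graph there is exactly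
one root, it is labelled `□`, and every `△`-node has a directed path to it. In a tree in normal
form the root therefore has no child (a `□`-child enables `r2`, a `△`-child closes a directed
cycle) and no parent (the root would be a leaf, enabling `r0` or `r1`), so by connectedness it is
the only node.
-/

instance {LV LE : Type} (G : RGraph LV LE) : Finite G.V := G.finV
instance {LV LE : Type} (G : RGraph LV LE) : Finite G.E := G.finE

section Walks

variable {LV LE : Type} {G : RGraph LV LE}

def IsDirWalk (G : RGraph LV LE) : G.V → List G.E → G.V → Prop
  | v, [], w => v = w
  | v, e :: rest, w => G.s e = v ∧ IsDirWalk G (G.t e) rest w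

def UndirReachable (G : RGraph LV LE) (v w : G.V) : Prop := ∃ c, IsUndirWalk G v c w

theorem IsDirWalk.append : ∀ {c₁ c₂ : List G.E} {u v w : G.V},
    IsDirWalk G u c₁ v → IsDirWalk G v c₂ w → IsDirWalk G u (c₁ ++ c₂) w
  | [], _, _, _, _, rfl, h₂ => h₂
  | _ :: _, _, _, _, _, h₁, h₂ => ⟨h₁.1, h₁.2.append h₂⟩

theorem IsDirWalk.of_append : ∀ {c₁ c₂ : List G.E} {u w : G.V},
    IsDirWalk G u (c₁ ++ c₂) w → ∃ v, IsDirWalk G u c₁ v ∧ IsDirWalk G v c₂ w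
  | [], _, u, _, h => ⟨u, rfl, h⟩
  | _ :: _, _, _, _, h => by
    obtain ⟨v, h₁, h₂⟩ := IsDirWalk.of_append h.2
    exact ⟨v, ⟨h.1, h₁⟩, h₂⟩

theorem IsDirWalk.toUndir : ∀ {c : List G.E} {v w : G.V},
    IsDirWalk G v c w → IsUndirWalk G v (c.map fun e => (e, true)) w
  | [], _, _, h => h
  | _ :: _, _, _, h => ⟨h.1, h.2.toUndir⟩

theorem IsUndirWalk.append : ∀ {c₁ c₂ : List (G.E × Bool)} {u v w : G.V},
    IsUndirWalk G u c₁ v → IsUndirWalk G v c₂ w → IsUndirWalk G u (c₁ ++ c₂) w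
  | [], _, _, _, _, rfl, h₂ => h₂
  | (_, true) :: _, _, _, _, _, h₁, h₂ => ⟨h₁.1, h₁.2.append h₂⟩
  | (_, false) :: _, _, _, _, _, h₁, h₂ => ⟨h₁.1, h₁.2.append h₂⟩

theorem IsUndirWalk.of_append : ∀ {c₁ c₂ : List (G.E × Bool)} {u w : G.V},
    IsUndirWalk G u (c₁ ++ c₂) w → ∃ v, IsUndirWalk G u c₁ v ∧ IsUndirWalk G v c₂ w
  | [], _, u, _, h => ⟨u, rfl, h⟩
  | (_, true) :: _, _, _, _, h => by
    obtain ⟨v, h₁, h₂⟩ := IsUndirWalk.of_append h.2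
    exact ⟨v, ⟨h.1, h₁⟩, h₂⟩
  | (_, false) :: _, _, _, _, h => by
    obtain ⟨v, h₁, h₂⟩ := IsUndirWalk.of_append h.2
    exact ⟨v, ⟨h.1, h₁⟩, h₂⟩

theorem IsUndirWalk.reverse : ∀ {c : List (G.E × Bool)} {v w : G.V},
    IsUndirWalk G v c w → IsUndirWalk G w (c.reverse.map fun q => (q.1, !q.2)) v
  | [], _, _, h => h.symm
  | (_, true) :: _, _, _, h => by
    simpa using h.2.reverse.append (show IsUndirWalk G _ [(_, false)] _ from ⟨rfl, h.1⟩)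
  | (_, false) :: _, _, _, h => by
    simpa using h.2.reverse.append (show IsUndirWalk G _ [(_, true)] _ from ⟨rfl, h.1⟩)

theorem UndirReachable.refl (v : G.V) : UndirReachable G v v := ⟨[], rfl⟩

theorem UndirReachable.trans {u v w : G.V} :
    UndirReachable G u v → UndirReachable G v w → UndirReachable G u w
  | ⟨c₁, h₁⟩, ⟨c₂, h₂⟩ => ⟨c₁ ++ c₂, h₁.append h₂⟩

theorem UndirReachable.symm {v w : G.V} : UndirReachable G v w → UndirReachable G w v
  | ⟨_, h⟩ => ⟨_, h.reverse⟩

theorem UndirReachable.of_edge (e : G.E) : UndirReachable G (G.s e) (G.t e) :=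
  ⟨[(e, true)], rfl, rfl⟩

theorem IsDirWalk.eq_nil_of_closed (hG : ¬ HasUndirCycle G) {c : List G.E} {v : G.V}
    (hc : IsDirWalk G v c v) : c = [] := by
  induction hn : c.length using Nat.strong_induction_on generalizing c v with
  | _ n ih =>
  by_contra hne
  by_cases hnd : c.Nodup
  · exact hG ⟨v, _, by simpa using hne, hc.toUndir, by simpa [Function.comp_def] using hnd⟩
  -- a repeated edge `e` cuts out the shorter closed walk from one occurrence to the next
  obtain ⟨e, he⟩ : ∃ e, List.Sublist [e, e] c := by simpa [List.nodup_iff_sublist] using hnd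
  obtain ⟨c₁, c₂, rfl, he₁, he₂⟩ := List.cons_sublist_iff.mp he
  obtain ⟨p, q, rfl⟩ := List.append_of_mem he₁
  obtain ⟨x, y, rfl⟩ := List.append_of_mem (List.singleton_sublist.mp he₂)
  obtain ⟨w, hw₁, hw₂⟩ := hc.of_append
  obtain ⟨_, -, rfl, hq⟩ := hw₁.of_append
  obtain ⟨_, hx, hey, -⟩ := hw₂.of_append
  have := ih _ (by simp [← hn]; omega) (c := e :: (q ++ x)) ⟨rfl, hq.append (hey ▸ hx)⟩ rfl
  simp at this

theorem IsTree.src_ne_tgt (hT : IsTree G) (e : G.E) : G.s e ≠ G.t e :=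
  fun he => hT.2.2.1 ⟨G.s e, [(e, true)], List.cons_ne_nil _ _, ⟨rfl, he.symm⟩, by simp⟩

end Walks

section Isomorphisms

variable {LV LE : Type} {G H K : RGraph LV LE}

theorem Morphism.isUndirWalk_map (f : Morphism G H) : ∀ {c : List (G.E × Bool)} {v w : G.V},
    IsUndirWalk G v c w → IsUndirWalk H (f.fV v) (c.map fun q => (f.fE q.1, q.2)) (f.fV w)
  | [], _, _, h => congrArg f.fV h
  | (_, true) :: _, _, _, h => ⟨by rw [← f.src, h.1], by rw [← f.tgt]; exact f.isUndirWalk_map h.2⟩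
  | (_, false) :: _, _, _, h => ⟨by rw [← f.tgt, h.1], by rw [← f.src]; exact f.isUndirWalk_map h.2⟩

theorem Morphism.isDirWalk_map (f : Morphism G H) : ∀ {c : List G.E} {v w : G.V},
    IsDirWalk G v c w → IsDirWalk H (f.fV v) (c.map f.fE) (f.fV w)
  | [], _, _, h => congrArg f.fV h
  | _ :: _, _, _, h => ⟨by rw [← f.src, h.1], by rw [← f.tgt]; exact f.isDirWalk_map h.2⟩

namespace Iso

def refl (G : RGraph LV LE) : Iso G G :=
  ⟨Morphism.ident G, Morphism.ident G, fun _ => rfl, fun _ => rfl, fun _ => rfl, fun _ => rfl⟩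

def symm (φ : Iso G H) : Iso H G := ⟨φ.invMor, φ.toMor, φ.rightV, φ.rightE, φ.leftV, φ.leftE⟩

def trans (φ : Iso G H) (ψ : Iso H K) : Iso G K where
  toMor := φ.toMor.comp ψ.toMor
  invMor := ψ.invMor.comp φ.invMor
  leftV v := by simp only [Morphism.comp, Function.comp_apply, ψ.leftV, φ.leftV]
  leftE e := by simp only [Morphism.comp, Function.comp_apply, ψ.leftE, φ.leftE]
  rightV v := by simp only [Morphism.comp, Function.comp_apply, φ.rightV, ψ.rightV]
  rightE e := by simp only [Morphism.comp, Function.comp_apply, φ.rightE, ψ.rightE]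

def equivV (φ : Iso G H) : G.V ≃ H.V := ⟨φ.toMor.fV, φ.invMor.fV, φ.leftV, φ.rightV⟩

def equivE (φ : Iso G H) : G.E ≃ H.E := ⟨φ.toMor.fE, φ.invMor.fE, φ.leftE, φ.rightE⟩

theorem l_apply (φ : Iso G H) (v : G.V) : H.l (φ.toMor.fV v) = G.l v := by
  cases hl : G.l v with
  | some x => exact φ.toMor.nodeLabel v x hl
  | none =>
    cases hl' : H.l (φ.toMor.fV v) with
    | none => rfl
    | some x => simpa [φ.leftV, hl] using φ.invMor.nodeLabel _ x hl'

theorem p_apply (φ : Iso G H) (v : G.V) : H.p (φ.toMor.fV v) = G.p v := by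
  cases hp : G.p v with
  | some b => exact φ.toMor.rootedness v b hp
  | none =>
    cases hp' : H.p (φ.toMor.fV v) with
    | none => rfl
    | some b => simpa [φ.leftV, hp] using φ.invMor.rootedness _ b hp'

def ofEquiv (eV : G.V ≃ H.V) (eE : G.E ≃ H.E)
    (hs : ∀ e, H.s (eE e) = eV (G.s e)) (ht : ∀ e, H.t (eE e) = eV (G.t e))
    (hm : ∀ e, H.m (eE e) = G.m e) (hl : ∀ v, H.l (eV v) = G.l v)
    (hp : ∀ v, H.p (eV v) = G.p v) : Iso G H where
  toMor :=
    { fV := eV, fE := eE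
      src := fun e => (hs e).symm
      tgt := fun e => (ht e).symm
      edgeLabel := fun e => (hm e).symm
      nodeLabel := fun v _ h => (hl v).trans h
      rootedness := fun v _ h => (hp v).trans h }
  invMor :=
    { fV := eV.symm, fE := eE.symm
      src := fun e => eV.symm_apply_eq.mpr (by rw [← hs, Equiv.apply_symm_apply])
      tgt := fun e => eV.symm_apply_eq.mpr (by rw [← ht, Equiv.apply_symm_apply])
      edgeLabel := fun e => by rw [← hm, Equiv.apply_symm_apply]
      nodeLabel := fun v _ h => by rwa [← hl, Equiv.apply_symm_apply]
      rootedness := fun v _ h => by rwa [← hp, Equiv.apply_symm_apply] }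
  leftV := eV.symm_apply_apply
  leftE := eE.symm_apply_apply
  rightV := eV.apply_symm_apply
  rightE := eE.apply_symm_apply

theorem isTree (φ : Iso G H) (hG : IsTree G) : IsTree H := by
  obtain ⟨⟨v₀⟩, hconn, hcyc, hdeg⟩ := hG
  refine ⟨⟨φ.toMor.fV v₀⟩, fun v w => ?_, ?_, fun v => ?_⟩
  · obtain ⟨c, hc⟩ := hconn (φ.invMor.fV v) (φ.invMor.fV w)
    have := φ.toMor.isUndirWalk_map hc
    rw [φ.rightV, φ.rightV] at this
    exact ⟨_, this⟩
  · rintro ⟨v, c, hne, hc, hnd⟩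
    refine hcyc ⟨φ.invMor.fV v, _, by simpa using hne, φ.invMor.isUndirWalk_map hc, ?_⟩
    simpa [Function.comp_def] using hnd.map (Function.LeftInverse.injective φ.rightE)
  · refine (Nat.card_congr (φ.equivE.symm.subtypeEquiv fun e => ?_)).trans_le (hdeg (φ.invMor.fV v))
    simp only [equivE, Equiv.coe_fn_symm_mk, ← φ.invMor.tgt]
    exact ⟨congrArg _, fun h => by simpa [φ.rightV, φ.rightE] using congrArg φ.toMor.fV h⟩

end Iso

end Isomorphisms

namespace RGraph

variable {LV LE : Type}

def relabel (G : RGraph LV LE) (l : G.V → Option LV) (p : G.V → Option Bool) : RGraph LV LE :=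
  { G with l := l, p := p }

def SoleEdgeAt (G : RGraph LV LE) (v : G.V) (e : G.E) : Prop :=
  ∀ e', e' ≠ e → G.s e' ≠ v ∧ G.t e' ≠ v

def removeLeaf (G : RGraph LV LE) (v : G.V) (e : G.E) (h : G.SoleEdgeAt v e) : RGraph LV LE where
  V := {x : G.V // x ≠ v}
  E := {x : G.E // x ≠ e}
  finV := inferInstance
  finE := inferInstance
  s x := ⟨G.s x.1, (h x.1 x.2).1⟩
  t x := ⟨G.t x.1, (h x.1 x.2).2⟩
  l x := G.l x.1
  m x := G.m x.1
  p x := G.p x.1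

end RGraph

section Relabel

variable {LV LE : Type} {G : RGraph LV LE} {l : G.V → Option LV} {p : G.V → Option Bool}

theorem isUndirWalk_relabel : ∀ {c : List (G.E × Bool)} {v w : G.V},
    IsUndirWalk (G.relabel l p) v c w ↔ IsUndirWalk G v c w
  | [], _, _ => Iff.rfl
  | (_, true) :: _, _, _ => and_congr Iff.rfl isUndirWalk_relabel
  | (_, false) :: _, _, _ => and_congr Iff.rfl isUndirWalk_relabel

theorem isDirWalk_relabel : ∀ {c : List G.E} {v w : G.V},
    IsDirWalk (G.relabel l p) v c w ↔ IsDirWalk G v c w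
  | [], _, _ => Iff.rfl
  | _ :: _, _, _ => and_congr Iff.rfl isDirWalk_relabel

theorem isTree_relabel : IsTree (G.relabel l p) ↔ IsTree G := by
  refine and_congr Iff.rfl (and_congr (forall₂_congr fun _ _ => exists_congr fun _ =>
    isUndirWalk_relabel) (and_congr (not_congr (exists₂_congr fun _ _ =>
      and_congr_right' (and_congr_left' isUndirWalk_relabel))) Iff.rfl))

end Relabel

section RemoveLeaf

variable {LV LE : Type} {G : RGraph LV LE} {u v : G.V} {e : G.E} {h : G.SoleEdgeAt v e}

theorem IsUndirWalk.of_removeLeaf : ∀ {c} {a b : (G.removeLeaf v e h).V},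
    IsUndirWalk (G.removeLeaf v e h) a c b → IsUndirWalk G a.1 (c.map fun q => (q.1.1, q.2)) b.1
  | [], _, _, hc => congrArg Subtype.val hc
  | (_, true) :: _, _, _, hc => ⟨congrArg Subtype.val hc.1, hc.2.of_removeLeaf⟩
  | (_, false) :: _, _, _, hc => ⟨congrArg Subtype.val hc.1, hc.2.of_removeLeaf⟩

theorem IsUndirWalk.exists_removeLeaf : ∀ {c : List (G.E × Bool)} {a b : G.V} (ha : a ≠ v)
    (hb : b ≠ v), IsUndirWalk G a c b → (∀ q ∈ c, q.1 ≠ e) →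
    ∃ c', IsUndirWalk (G.removeLeaf v e h) ⟨a, ha⟩ c' ⟨b, hb⟩ ∧ c'.map (fun q => (q.1.1, q.2)) = c
  | [], _, _, _, _, hc, _ => ⟨[], Subtype.ext hc, rfl⟩
  | (e', true) :: _, _, _, _, hb, hc, hce => by
    have he' : e' ≠ e := hce _ List.mem_cons_self
    obtain ⟨c', hc', rfl⟩ := hc.2.exists_removeLeaf (h e' he').2 hb
      fun q hq => hce q (List.mem_cons_of_mem _ hq)
    exact ⟨(⟨e', he'⟩, true) :: c', ⟨Subtype.ext hc.1, hc'⟩, rfl⟩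
  | (e', false) :: _, _, _, _, hb, hc, hce => by
    have he' : e' ≠ e := hce _ List.mem_cons_self
    obtain ⟨c', hc', rfl⟩ := hc.2.exists_removeLeaf (h e' he').1 hb
      fun q hq => hce q (List.mem_cons_of_mem _ hq)
    exact ⟨(⟨e', he'⟩, false) :: c', ⟨Subtype.ext hc.1, hc'⟩, rfl⟩

theorem RGraph.SoleEdgeAt.walk_eq_nil (h : G.SoleEdgeAt v e) {c : List (G.E × Bool)} {b : G.V}
    (hc : IsUndirWalk G v c b) (hce : ∀ q ∈ c, q.1 ≠ e) : c = [] := by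
  match c, hc with
  | [], _ => rfl
  | (e', true) :: _, hc => exact absurd hc.1 (h e' (hce _ List.mem_cons_self)).1
  | (e', false) :: _, hc => exact absurd hc.1 (h e' (hce _ List.mem_cons_self)).2

theorem IsDirWalk.exists_removeLeaf (hs : G.s e = u) (huv : u ≠ v) :
    ∀ {c : List G.E} {x : G.V} (hx : x ≠ v), IsDirWalk G x c v →
      ∃ c', IsDirWalk (G.removeLeaf v e h) ⟨x, hx⟩ c' ⟨u, huv⟩
  | [], _, hx, hc => absurd hc hx
  | e' :: _, _, _, hc => by
    by_cases he' : e' = e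
    · exact ⟨[], Subtype.ext (hc.1.symm.trans (he' ▸ hs))⟩
    · obtain ⟨c', hc'⟩ := hc.2.exists_removeLeaf hs huv (h e' he').2
      exact ⟨⟨e', he'⟩ :: c', Subtype.ext hc.1, hc'⟩

theorem isConnectedGraph_removeLeaf (hs : G.s e = u) (ht : G.t e = v) (huv : u ≠ v)
    (hG : IsConnectedGraph G) : IsConnectedGraph (G.removeLeaf v e h) := by
  classical
  -- retract `v` onto `u`: every step of a walk in `G` becomes a walk in the smaller graph
  let ρ : G.V → (G.removeLeaf v e h).V := fun x => if hx : x = v then ⟨u, huv⟩ else ⟨x, hx⟩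
  have hρ : ∀ x (hx : x ≠ v), ρ x = ⟨x, hx⟩ := fun x hx => dif_neg hx
  have step : ∀ e', UndirReachable (G.removeLeaf v e h) (ρ (G.s e')) (ρ (G.t e')) := by
    intro e'
    by_cases he' : e' = e
    · subst he'
      rw [ht, hs, hρ u huv, show ρ v = ⟨u, huv⟩ from dif_pos rfl]
      exact .refl _
    · rw [hρ _ (h e' he').1, hρ _ (h e' he').2]
      exact .of_edge (G := G.removeLeaf v e h) ⟨e', he'⟩
  have walk : ∀ c {a b : G.V}, IsUndirWalk G a c b →
      UndirReachable (G.removeLeaf v e h) (ρ a) (ρ b) := by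
    intro c
    induction c with
    | nil => rintro a b rfl; exact .refl _
    | cons q c ih =>
      obtain ⟨e', _ | _⟩ := q <;> rintro a b ⟨rfl, hc⟩
      · exact (step e').symm.trans (ih hc)
      · exact (step e').trans (ih hc)
  intro x y
  obtain ⟨c, hc⟩ := hG x.1 y.1
  have hxy := walk c hc
  rwa [hρ _ x.2, hρ _ y.2] at hxy

theorem isConnectedGraph_of_removeLeaf (hs : G.s e = u) (ht : G.t e = v) (huv : u ≠ v)
    (hR : IsConnectedGraph (G.removeLeaf v e h)) : IsConnectedGraph G := by
  have toU : ∀ x, UndirReachable G x u := by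
    intro x
    by_cases hx : x = v
    · exact ⟨[(e, false)], ht.trans hx.symm, hs⟩
    · exact ⟨_, (hR ⟨x, hx⟩ ⟨u, huv⟩).choose_spec.of_removeLeaf⟩
  exact fun x y => (toU x).trans (toU y).symm

theorem hasUndirCycle_removeLeaf_iff (hs : G.s e = u) (ht : G.t e = v) (huv : u ≠ v) :
    HasUndirCycle (G.removeLeaf v e h) ↔ HasUndirCycle G := by
  constructor
  · rintro ⟨x, c, hne, hc, hnd⟩
    refine ⟨x.1, _, by simpa using hne, hc.of_removeLeaf, ?_⟩
    rw [List.map_map]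
    exact List.map_map (f := Prod.fst) (g := Subtype.val) (l := c) ▸
      hnd.map Subtype.val_injective
  rintro ⟨x, c, hne, hc, hnd⟩
  by_cases hce : ∀ q ∈ c, q.1 ≠ e
  · have hx : x ≠ v := by rintro rfl; exact hne (h.walk_eq_nil hc hce)
    obtain ⟨c', hc', rfl⟩ := hc.exists_removeLeaf (h := h) hx hx hce
    refine ⟨⟨x, hx⟩, c', by simpa using hne, hc', ?_⟩
    rw [List.map_map] at hnd
    exact (List.map_map (f := Prod.fst) (g := Subtype.val) (l := c') ▸ hnd).of_map
  -- a cycle through `e` would leave the leaf `v` again without using `e`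
  push Not at hce
  obtain ⟨⟨e', b⟩, hmem, he'⟩ := hce
  obtain rfl : e = e' := he'.symm
  obtain ⟨c₁, c₂, rfl⟩ := List.append_of_mem hmem
  obtain ⟨m, hc₁, hc₂⟩ := hc.of_append
  rw [List.map_append, List.map_cons, List.nodup_middle, List.nodup_cons] at hnd
  have havoid : ∀ q ∈ c₂ ++ c₁, q.1 ≠ e := by
    intro q hq hqe
    refine hnd.1 ?_
    rw [← hqe]
    rcases List.mem_append.mp hq with hq | hq
    exacts [List.mem_append_right _ (List.mem_map.mpr ⟨q, hq, rfl⟩),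
      List.mem_append_left _ (List.mem_map.mpr ⟨q, hq, rfl⟩)]
  exfalso
  cases b
  · obtain ⟨hm, hc₂⟩ := hc₂
    have hw := (hc₂.append hc₁).reverse
    rw [← hm, ht] at hw
    have hnil := h.walk_eq_nil hw fun q hq => by
      obtain ⟨q', hq', rfl⟩ := List.mem_map.mp hq
      exact havoid q' (List.mem_reverse.mp hq')
    rw [hnil] at hw
    exact huv (hs ▸ hw).symm
  · obtain ⟨hm, hc₂⟩ := hc₂
    have hw := hc₂.append hc₁
    rw [← hm, ht] at hw
    rw [h.walk_eq_nil hw havoid] at hw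
    exact huv (hs ▸ hw).symm

theorem inDegree_le_one_removeLeaf_iff (ht : G.t e = v) :
    (∀ x, Nat.card {e' // (G.removeLeaf v e h).t e' = x} ≤ 1) ↔
      ∀ x, Nat.card {e' // G.t e' = x} ≤ 1 := by
  constructor
  · intro hR x
    by_cases hx : x = v
    · subst hx
      refine Finite.card_le_one_iff_subsingleton.mpr ⟨fun e₁ e₂ => Subtype.ext ?_⟩
      have key : ∀ e' : {e' // G.t e' = x}, e'.1 = e :=
        fun e' => by_contra fun hne => (h _ hne).2 e'.2
      rw [key, key]
    · refine (Nat.card_le_card_of_injective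
        (fun e' => ⟨⟨e'.1, fun he => hx (e'.2 ▸ he ▸ ht)⟩, Subtype.ext e'.2⟩ :
          {e' // G.t e' = x} → {e' // (G.removeLeaf v e h).t e' = ⟨x, hx⟩}) ?_).trans (hR _)
      exact fun e₁ e₂ he => Subtype.ext (congrArg (·.1.1) he)
  · intro hG x
    refine (Nat.card_le_card_of_injective
      (fun e' => ⟨e'.1.1, congrArg Subtype.val e'.2⟩ :
        {e' // (G.removeLeaf v e h).t e' = x} → {e' // G.t e' = x.1}) ?_).trans (hG _)
    exact fun e₁ e₂ he => Subtype.ext (Subtype.ext (congrArg (·.1) he))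

theorem isTree_removeLeaf_iff (hs : G.s e = u) (ht : G.t e = v) (huv : u ≠ v) :
    IsTree (G.removeLeaf v e h) ↔ IsTree G :=
  ⟨fun ⟨_, hconn, hcyc, hdeg⟩ => ⟨⟨u⟩, isConnectedGraph_of_removeLeaf hs ht huv hconn,
      (hasUndirCycle_removeLeaf_iff hs ht huv).not.mp hcyc,
      (inDegree_le_one_removeLeaf_iff ht).mp hdeg⟩,
    fun ⟨_, hconn, hcyc, hdeg⟩ => ⟨⟨⟨u, huv⟩⟩, isConnectedGraph_removeLeaf hs ht huv hconn,
      (hasUndirCycle_removeLeaf_iff hs ht huv).not.mpr hcyc,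
      (inDegree_le_one_removeLeaf_iff ht).mpr hdeg⟩⟩

end RemoveLeaf

section TreeInvariant

structure TreeInv (G : RGraph NodeLab Unit) : Prop where
  labelled : G.IsTotallyLabelled
  rooted : G.IsTotallyRooted
  existsUnique_root : ∃! x, G.p x = some true
  root_square : ∀ x, G.p x = some true → G.l x = some .square
  tri_reaches_root :
    ∀ x, G.l x = some .tri → ∃ c w, c ≠ [] ∧ IsDirWalk G x c w ∧ G.p w = some true

theorem IsInputGraph.treeInv {G : RGraph NodeLab Unit} (hG : IsInputGraph G) : TreeInv G := by
  obtain ⟨⟨hl, hp⟩, hsq, hcard⟩ := hG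
  obtain ⟨⟨r, hr⟩, hr'⟩ := Nat.card_eq_one_iff_exists.mp hcard
  exact ⟨hl, hp, ⟨r, hr, fun y hy => congrArg Subtype.val (hr' ⟨y, hy⟩)⟩,
    fun x _ => hsq x, fun x hx => by simp [hsq x] at hx⟩

theorem Iso.treeInv {G H : RGraph NodeLab Unit} (φ : Iso G H) (hI : TreeInv G) : TreeInv H := by
  obtain ⟨hl, hp, ⟨r, hr, hr'⟩, hsq, htri⟩ := hI
  have hl' : ∀ x, H.l x = G.l (φ.invMor.fV x) := fun x => by rw [← φ.l_apply, φ.rightV]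
  have hp' : ∀ x, H.p x = G.p (φ.invMor.fV x) := fun x => by rw [← φ.p_apply, φ.rightV]
  refine ⟨fun x => hl' x ▸ hl _, fun x => hp' x ▸ hp _,
    ⟨φ.toMor.fV r, (φ.p_apply r).trans hr, fun y hy => ?_⟩, fun x hx => ?_, fun x hx => ?_⟩
  · rw [← hr' _ ((hp' y).symm.trans hy), φ.rightV]
  · rw [hl']; exact hsq _ ((hp' x).symm.trans hx)
  · obtain ⟨c, w, hne, hc, hw⟩ := htri _ ((hl' x).symm.trans hx)
    refine ⟨c.map φ.toMor.fE, φ.toMor.fV w, by simpa using hne, ?_, (φ.p_apply w).trans hw⟩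
    simpa only [φ.rightV] using φ.toMor.isDirWalk_map hc

end TreeInvariant

section PruneReroot

variable {G : RGraph NodeLab Unit} {u v : G.V} {e : G.E} {h : G.SoleEdgeAt v e}

open Classical in
/-- The effect of `r0` and `r1`, up to isomorphism. -/
noncomputable def prune (G : RGraph NodeLab Unit) (u v : G.V) (e : G.E) (h : G.SoleEdgeAt v e) :
    RGraph NodeLab Unit :=
  (G.removeLeaf v e h).relabel (fun x => if x.1 = u then some .square else G.l x.1)
    (fun x => if x.1 = u then some true else G.p x.1)

open Classical in
/-- The effect of `r2`, up to isomorphism. -/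
noncomputable def reroot (G : RGraph NodeLab Unit) (u v : G.V) : RGraph NodeLab Unit :=
  G.relabel (fun x => if x = u then some .tri else if x = v then some .square else G.l x)
    (fun x => if x = u then some false else if x = v then some true else G.p x)

open Classical in
theorem prune_l (x : (prune G u v e h).V) :
    (prune G u v e h).l x = if x.1 = u then some .square else G.l x.1 := rfl

open Classical in
theorem prune_p (x : (prune G u v e h).V) :
    (prune G u v e h).p x = if x.1 = u then some true else G.p x.1 := rfl

open Classical in
theorem reroot_l (x : G.V) :
    (reroot G u v).l x = if x = u then some .tri else if x = v then some .square else G.l x := rfl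

open Classical in
theorem reroot_p (x : G.V) :
    (reroot G u v).p x = if x = u then some false else if x = v then some true else G.p x := rfl

noncomputable def terminationMeasure (G : RGraph NodeLab Unit) : ℕ :=
  Nat.card G.V ^ 2 + Nat.card {x // G.l x = some .square}

theorem treeInv_prune (hI : TreeInv G) (hs : G.s e = u) (huv : u ≠ v)
    (hv : G.p v = some true) : TreeInv (prune G u v e h) := by
  obtain ⟨hl, hp, ⟨r, -, hr⟩, -, htri⟩ := hI
  have hroot : ∀ x, G.p x = some true → x = v := fun x hx => (hr x hx).trans (hr v hv).symm
  have hu : ∀ y : (prune G u v e h).V, G.p y.1 = some true → y.1 = u :=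
    fun y hy => absurd (hroot _ hy) y.2
  refine ⟨fun x => ?_, fun x => ?_, ⟨⟨u, huv⟩, if_pos rfl, fun y hy => Subtype.ext ?_⟩,
    fun y hy => ?_, fun y hy => ?_⟩
  · rw [prune_l]
    split_ifs
    exacts [rfl, hl _]
  · rw [prune_p]
    split_ifs
    exacts [rfl, hp _]
  · beta_reduce at hy
    rw [prune_p] at hy
    split_ifs at hy with hyu
    exacts [hyu, hu y hy]
  · rw [prune_p] at hy
    rw [prune_l, if_pos]
    split_ifs at hy with hyu
    exacts [hyu, hu y hy]
  · rw [prune_l] at hy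
    split_ifs at hy with hyu
    · cases hy
    obtain ⟨c, w, -, hc, hw⟩ := htri y.1 hy
    obtain ⟨_ | ⟨e', c'⟩, hc'⟩ := (hroot w hw ▸ hc).exists_removeLeaf (h := h) hs huv y.2
    · exact absurd (congrArg Subtype.val hc') hyu
    · exact ⟨e' :: c', ⟨u, huv⟩, List.cons_ne_nil _ _, isDirWalk_relabel.mpr hc', if_pos rfl⟩

theorem treeInv_reroot (hI : TreeInv G) (hs : G.s e = u) (ht : G.t e = v) (huv : u ≠ v)
    (hu : G.p u = some true) : TreeInv (reroot G u v) := by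
  obtain ⟨hl, hp, ⟨r, -, hr⟩, -, htri⟩ := hI
  have hroot : ∀ x, G.p x = some true → x = u := fun x hx => (hr x hx).trans (hr u hu).symm
  have hv : (reroot G u v).p v = some true := by rw [reroot_p, if_neg huv.symm, if_pos rfl]
  refine ⟨fun (x : G.V) => ?_, fun (x : G.V) => ?_, ⟨v, hv, fun (y : G.V) hy => ?_⟩,
    fun (y : G.V) hy => ?_, fun (y : G.V) hy => ?_⟩
  · rw [reroot_l]
    split_ifs
    exacts [rfl, rfl, hl _]
  · rw [reroot_p]
    split_ifs
    exacts [rfl, rfl, hp _]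
  · beta_reduce at hy
    rw [reroot_p] at hy
    split_ifs at hy with hyu hyv
    · cases hy
    · exact hyv
    · exact absurd (hroot y hy) hyu
  · rw [reroot_p] at hy
    rw [reroot_l]
    split_ifs at hy ⊢ with hyu hyv
    · cases hy
    · rfl
    · exact absurd (hroot y hy) hyu
  · rw [reroot_l] at hy
    split_ifs at hy with hyu hyv
    · exact ⟨[e], v, List.cons_ne_nil _ _, ⟨hs.trans hyu.symm, ht⟩, hv⟩
    · cases hy
    · obtain ⟨c, w, -, hc, hw⟩ := htri y hy
      refine ⟨c ++ [e], v, List.append_ne_nil_of_right_ne_nil c (List.cons_ne_nil e []),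
        isDirWalk_relabel.mpr ?_, hv⟩
      exact (hroot w hw ▸ hc).append ⟨hs, ht⟩

theorem isTree_prune_iff (hs : G.s e = u) (ht : G.t e = v) (huv : u ≠ v) :
    IsTree (prune G u v e h) ↔ IsTree G :=
  isTree_relabel.trans (isTree_removeLeaf_iff hs ht huv)

theorem isTree_reroot_iff : IsTree (reroot G u v) ↔ IsTree G := isTree_relabel

theorem Iso.terminationMeasure_eq {G H : RGraph NodeLab Unit} (φ : Iso G H) :
    terminationMeasure G = terminationMeasure H := by
  have hsq : Nat.card {x // G.l x = some .square} = Nat.card {x // H.l x = some .square} :=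
    Nat.card_congr (φ.equivV.subtypeEquiv fun x => by rw [← φ.l_apply]; rfl)
  rw [terminationMeasure, terminationMeasure, Nat.card_congr φ.equivV, hsq]

theorem terminationMeasure_prune_lt :
    terminationMeasure (prune G u v e h) < terminationMeasure G := by
  have hV : Nat.card (prune G u v e h).V < Nat.card G.V :=
    Finite.card_subtype_lt (x := v) (by simp)
  have hsq := Finite.card_subtype_le fun x : (prune G u v e h).V =>
    (prune G u v e h).l x = some .square
  rw [terminationMeasure, terminationMeasure]
  nlinarith

theorem terminationMeasure_reroot_lt (hu : G.l u = some .square) (hv : G.l v = some .square) :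
    terminationMeasure (reroot G u v) < terminationMeasure G := by
  have hsq : ∀ x : G.V, (reroot G u v).l x = some .square → G.l x = some .square ∧ x ≠ u := by
    intro x hx
    rw [reroot_l] at hx
    split_ifs at hx with hxu hxv
    · cases hx
    · exact ⟨hxv ▸ hv, hxu⟩
    · exact ⟨hx, hxu⟩
  have hlt : Nat.card {x // (reroot G u v).l x = some .square} <
      Nat.card {x // G.l x = some .square} :=
    (Nat.card_le_card_of_injective
      (fun x => ⟨⟨x.1, (hsq x.1 x.2).1⟩, fun hx => (hsq x.1 x.2).2 (congrArg Subtype.val hx)⟩ :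
        {x // (reroot G u v).l x = some .square} →
          {y : {x // G.l x = some .square} // y ≠ ⟨u, hu⟩})
      fun _ _ hxy => Subtype.ext (congrArg (·.1.1) hxy)).trans_lt
      (Finite.card_subtype_lt (x := ⟨u, hu⟩) (by simp))
  rw [terminationMeasure, terminationMeasure]
  exact Nat.add_lt_add_left hlt _

end PruneReroot

namespace Rule

variable {LV LE : Type} {r : Rule LV LE} {G : RGraph LV LE} {g : Morphism r.L G}

theorem result_l_inl_of_interface (h : r.Applicable G g) {k : r.K.V} (hk : r.K.l k = none)
    {x : {x // x ∉ r.DelV G g}} (hx : g.fV (r.incL.fV k) = x.1) :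
    (r.result G g h).l (.inl x) = r.R.l (r.incR.fV k) := by
  have hex : ∃ k, r.K.l k = none ∧ g.fV (r.incL.fV k) = x.1 := ⟨k, hk, hx⟩
  have hk' : hex.choose = k := r.injL.1 (h.1.1 (hex.choose_spec.2.trans hx.symm))
  simp only [result]
  rw [dif_pos hex, hk']

theorem result_l_inl_of_not_interface (h : r.Applicable G g) {x : {x // x ∉ r.DelV G g}}
    (hx : ∀ k, r.K.l k = none → g.fV (r.incL.fV k) ≠ x.1) :
    (r.result G g h).l (.inl x) = G.l x.1 := by
  simp only [result]
  rw [dif_neg fun ⟨k, hk, hkx⟩ => hx k hk hkx]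

theorem result_p_inl_of_interface (h : r.Applicable G g) {k : r.K.V} (hk : r.K.p k = none)
    {x : {x // x ∉ r.DelV G g}} (hx : g.fV (r.incL.fV k) = x.1) :
    (r.result G g h).p (.inl x) = r.R.p (r.incR.fV k) := by
  have hex : ∃ k, r.K.p k = none ∧ g.fV (r.incL.fV k) = x.1 := ⟨k, hk, hx⟩
  have hk' : hex.choose = k := r.injL.1 (h.1.1 (hex.choose_spec.2.trans hx.symm))
  simp only [result]
  rw [dif_pos hex, hk']

theorem result_p_inl_of_not_interface (h : r.Applicable G g) {x : {x // x ∉ r.DelV G g}}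
    (hx : ∀ k, r.K.p k = none → g.fV (r.incL.fV k) ≠ x.1) :
    (r.result G g h).p (.inl x) = G.p x.1 := by
  simp only [result]
  rw [dif_neg fun ⟨k, hk, hkx⟩ => hx k hk hkx]

theorem result_s_inr (h : r.Applicable G g) {y : {e // ∀ k, r.incR.fE k ≠ e}} {k : r.K.V}
    (hk : r.incR.fV k = r.R.s y.1) :
    (r.result G g h).s (.inr y) = .inl ⟨g.fV (r.incL.fV k), r.kept_incL G h.1 k⟩ := by
  have hex : ∃ k, r.incR.fV k = r.R.s y.1 := ⟨k, hk⟩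
  have hk' : hex.choose = k := r.injR.1 (hex.choose_spec.trans hk.symm)
  simp only [result]
  rw [dif_pos hex]
  simp only [hk']

theorem result_t_inr (h : r.Applicable G g) {y : {e // ∀ k, r.incR.fE k ≠ e}} {k : r.K.V}
    (hk : r.incR.fV k = r.R.t y.1) :
    (r.result G g h).t (.inr y) = .inl ⟨g.fV (r.incL.fV k), r.kept_incL G h.1 k⟩ := by
  have hex : ∃ k, r.incR.fV k = r.R.t y.1 := ⟨k, hk⟩
  have hk' : hex.choose = k := r.injR.1 (hex.choose_spec.trans hk.symm)
  simp only [result]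
  rw [dif_pos hex]
  simp only [hk']

end Rule

/-- The left-hand sides of all three rules are of this form. -/
abbrev edgeGraph {LV LE : Type} (a : LE) (l : Fin 2 → Option LV) (p : Fin 2 → Option Bool) :
    RGraph LV LE where
  V := Fin 2
  E := Unit
  finV := inferInstance
  finE := inferInstance
  s _ := 0
  t _ := 1
  l := l
  m _ := a
  p := p

section EdgeMatch

variable {LV LE : Type} {G : RGraph LV LE} {a : LE} {l : Fin 2 → Option LV}
  {p : Fin 2 → Option Bool}

def Morphism.ofEdge (e : G.E) (hm : G.m e = a) (hl₀ : G.l (G.s e) = l 0)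
    (hl₁ : G.l (G.t e) = l 1) (hp₀ : G.p (G.s e) = p 0) (hp₁ : G.p (G.t e) = p 1) :
    Morphism (edgeGraph a l p) G where
  fV := ![G.s e, G.t e]
  fE _ := e
  src _ := rfl
  tgt _ := rfl
  edgeLabel _ := hm.symm
  nodeLabel i x hx := by fin_cases i <;> simp_all
  rootedness i b hb := by fin_cases i <;> simp_all

theorem Morphism.ofEdge_injective {e : G.E} (hne : G.s e ≠ G.t e) {hm : G.m e = a}
    {hl₀ : G.l (G.s e) = l 0} {hl₁ : G.l (G.t e) = l 1} {hp₀ : G.p (G.s e) = p 0}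
    {hp₁ : G.p (G.t e) = p 1} : (Morphism.ofEdge e hm hl₀ hl₁ hp₀ hp₁).Injective :=
  ⟨fun i j hij => by fin_cases i <;> fin_cases j <;> simp_all [Morphism.ofEdge, hne.symm],
    fun _ _ _ => rfl⟩

end EdgeMatch

abbrev pruneRule (l : Fin 2 → Option NodeLab) : Rule NodeLab Unit where
  L := edgeGraph () l ![some false, some true]
  K := K0
  R := R0
  incL :=
    { fV := fun _ => 0
      fE := PEmpty.elim
      src := fun e => e.elim
      tgt := fun e => e.elim
      edgeLabel := fun e => e.elim
      nodeLabel := fun _ _ h => nomatch h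
      rootedness := fun _ _ h => nomatch h }
  incR := incR0
  injL := ⟨Function.injective_of_subsingleton _, Function.injective_of_subsingleton _⟩
  injR := ⟨Function.injective_of_subsingleton _, Function.injective_of_subsingleton _⟩

theorem r0_eq_pruneRule : r0 = pruneRule fun _ => some .square := rfl

theorem r1_eq_pruneRule : r1 = pruneRule ![some .tri, some .square] := rfl

namespace pruneRule

variable {l : Fin 2 → Option NodeLab} {G : RGraph NodeLab Unit} {g : Morphism (pruneRule l).L G}

theorem soleEdgeAt (h : (pruneRule l).Applicable G g) : G.SoleEdgeAt (g.fV 1) (g.fE ()) :=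
  fun _ he => h.2 _ (fun _ => Ne.symm he) 1 fun _ => zero_ne_one

theorem mem_delV_iff {x : G.V} :
    x ∈ (pruneRule l).DelV G g ↔ x = g.fV 1 := by
  constructor
  · rintro ⟨i, hi, rfl⟩
    fin_cases i
    exacts [absurd rfl (hi ()), rfl]
  · rintro rfl
    exact ⟨1, fun _ => zero_ne_one, rfl⟩

theorem mem_delE_iff {x : G.E} : x ∈ (pruneRule l).DelE G g ↔ x = g.fE () :=
  ⟨fun ⟨_, _, he⟩ => he.symm, fun he => ⟨(), fun k => k.elim, he.symm⟩⟩

theorem nonempty_iso_result (h : (pruneRule l).Applicable G g) :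
    Nonempty (Iso (prune G (g.fV 0) (g.fV 1) (g.fE ()) (soleEdgeAt h))
      ((pruneRule l).result G g h)) := by
  refine ⟨Iso.ofEquiv
    { toFun := fun x => .inl ⟨x.1, mem_delV_iff.not.mpr x.2⟩
      invFun := Sum.elim (fun y => ⟨y.1, mem_delV_iff.not.mp y.2⟩) fun y => (y.2 y.1 rfl).elim
      left_inv := fun _ => rfl
      right_inv := by rintro (_ | y); exacts [rfl, (y.2 y.1 rfl).elim] }
    { toFun := fun x => .inl ⟨x.1, mem_delE_iff.not.mpr x.2⟩
      invFun := Sum.elim (fun y => ⟨y.1, mem_delE_iff.not.mp y.2⟩) fun y => y.1.elim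
      left_inv := fun _ => rfl
      right_inv := by rintro (_ | y); exacts [rfl, y.1.elim] }
    (fun _ => rfl) (fun _ => rfl) (fun _ => rfl) (fun x => ?_) (fun x => ?_)⟩
  · change ((pruneRule l).result G g h).l (.inl _) = _
    by_cases hx : x.1 = g.fV 0
    · rw [Rule.result_l_inl_of_interface h (k := ()) rfl hx.symm, prune_l, if_pos hx]
    · rw [Rule.result_l_inl_of_not_interface h fun _ _ hk => hx hk.symm, prune_l, if_neg hx]
  · change ((pruneRule l).result G g h).p (.inl _) = _
    by_cases hx : x.1 = g.fV 0
    · rw [Rule.result_p_inl_of_interface h (k := ()) rfl hx.symm, prune_p, if_pos hx]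
    · rw [Rule.result_p_inl_of_not_interface h fun _ _ hk => hx hk.symm, prune_p, if_neg hx]

theorem exists_applicable {e : G.E} (hne : G.s e ≠ G.t e) (hleaf : G.SoleEdgeAt (G.t e) e)
    (hl₀ : G.l (G.s e) = l 0) (hl₁ : G.l (G.t e) = l 1) (hp₀ : G.p (G.s e) = some false)
    (hp₁ : G.p (G.t e) = some true) : ∃ g, (pruneRule l).Applicable G g := by
  refine ⟨Morphism.ofEdge e rfl hl₀ hl₁ hp₀ hp₁, Morphism.ofEdge_injective hne,
    fun e' he' w hw => ?_⟩
  fin_cases w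
  exacts [absurd rfl (hw ()), hleaf e' (he' ()).symm]

end pruneRule

namespace r2

variable {G : RGraph NodeLab Unit} {g : Morphism r2.L G}

theorem not_mem_delV {x : G.V} : x ∉ r2.DelV G g := fun ⟨w, hw, _⟩ => hw w rfl

theorem mem_delE_iff {x : G.E} : x ∈ r2.DelE G g ↔ x = g.fE () :=
  ⟨fun ⟨_, _, he⟩ => he.symm, fun he => ⟨(), fun k => k.elim, he.symm⟩⟩

theorem result_l (h : r2.Applicable G g) (x : G.V) :
    (r2.result G g h).l (.inl ⟨x, not_mem_delV⟩) =
      (reroot G (g.fV (0 : Fin 2)) (g.fV (1 : Fin 2))).l x := by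
  rw [reroot_l]
  split_ifs with h₀ h₁
  · exact Rule.result_l_inl_of_interface h (k := (0 : Fin 2)) rfl h₀.symm
  · exact Rule.result_l_inl_of_interface h (k := (1 : Fin 2)) rfl h₁.symm
  · refine Rule.result_l_inl_of_not_interface h fun (k : Fin 2) _ hk => ?_
    fin_cases k
    exacts [h₀ hk.symm, h₁ hk.symm]

theorem result_p (h : r2.Applicable G g) (x : G.V) :
    (r2.result G g h).p (.inl ⟨x, not_mem_delV⟩) =
      (reroot G (g.fV (0 : Fin 2)) (g.fV (1 : Fin 2))).p x := by
  rw [reroot_p]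
  split_ifs with h₀ h₁
  · exact Rule.result_p_inl_of_interface h (k := (0 : Fin 2)) rfl h₀.symm
  · exact Rule.result_p_inl_of_interface h (k := (1 : Fin 2)) rfl h₁.symm
  · refine Rule.result_p_inl_of_not_interface h fun (k : Fin 2) _ hk => ?_
    fin_cases k
    exacts [h₀ hk.symm, h₁ hk.symm]

open Classical in
/-- `r2` deletes the matched edge and adds it back; on edges, the result is `G` with that edge
moved into the right summand. -/
noncomputable def equivE (h : r2.Applicable G g) : G.E ≃ (r2.result G g h).E where
  toFun x :=
    if hx : x = g.fE () then .inr ⟨(), fun k => k.elim⟩ else .inl ⟨x, mem_delE_iff.not.mpr hx⟩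
  invFun := Sum.elim Subtype.val fun _ => g.fE ()
  left_inv x := by by_cases hx : x = g.fE () <;> simp [hx]
  right_inv := by
    rintro (y | y)
    exacts [dif_neg (mem_delE_iff.not.mp y.2), dif_pos rfl]

theorem equivE_apply_self (h : r2.Applicable G g) :
    equivE h (g.fE ()) = .inr ⟨(), fun k => k.elim⟩ := dif_pos rfl

theorem equivE_apply_of_ne (h : r2.Applicable G g) {x : G.E} (hx : x ≠ g.fE ()) :
    equivE h x = .inl ⟨x, mem_delE_iff.not.mpr hx⟩ := dif_neg hx

theorem result_s_equivE (h : r2.Applicable G g) (x : G.E) :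
    (r2.result G g h).s (equivE h x) = .inl ⟨G.s x, not_mem_delV⟩ := by
  by_cases hx : x = g.fE ()
  · subst hx
    exact (congrArg _ (equivE_apply_self h)).trans <|
      (Rule.result_s_inr h (k := (0 : Fin 2)) rfl).trans (congrArg Sum.inl (Subtype.ext (g.src ())))
  · exact congrArg _ (equivE_apply_of_ne h hx)

theorem result_t_equivE (h : r2.Applicable G g) (x : G.E) :
    (r2.result G g h).t (equivE h x) = .inl ⟨G.t x, not_mem_delV⟩ := by
  by_cases hx : x = g.fE ()
  · subst hx
    exact (congrArg _ (equivE_apply_self h)).trans <|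
      (Rule.result_t_inr h (k := (1 : Fin 2)) rfl).trans (congrArg Sum.inl (Subtype.ext (g.tgt ())))
  · exact congrArg _ (equivE_apply_of_ne h hx)

theorem nonempty_iso_result (h : r2.Applicable G g) :
    Nonempty (Iso (reroot G (g.fV (0 : Fin 2)) (g.fV (1 : Fin 2))) (r2.result G g h)) :=
  ⟨Iso.ofEquiv
    { toFun := fun x => .inl ⟨x, not_mem_delV⟩
      invFun := Sum.elim Subtype.val fun y => (y.2 y.1 rfl).elim
      left_inv := fun _ => rfl
      right_inv := by rintro (_ | y); exacts [rfl, (y.2 y.1 rfl).elim] }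
    (equivE h) (result_s_equivE h) (result_t_equivE h) (fun _ => rfl) (result_l h) (result_p h)⟩

theorem exists_applicable {e : G.E} (hne : G.s e ≠ G.t e)
    (hl₀ : G.l (G.s e) = some .square) (hl₁ : G.l (G.t e) = some .square)
    (hp₀ : G.p (G.s e) = some true) (hp₁ : G.p (G.t e) = some false) :
    ∃ g, r2.Applicable G g :=
  ⟨Morphism.ofEdge (a := ()) (l := fun _ => some NodeLab.square) (p := ![some true, some false])
      e rfl hl₀ hl₁ hp₀ hp₁, Morphism.ofEdge_injective hne, fun _ _ w hw => absurd rfl (hw w)⟩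

end r2

theorem exists_reflTransGen_of_measure {α : Type*} {R : α → α → Prop} {P : α → Prop}
    (f : α → ℕ) (hstep : ∀ a, ¬ P a → ∃ b, R a b ∧ f b < f a) (a : α) :
    ∃ b, Relation.ReflTransGen R a b ∧ P b := by
  induction hn : f a using Nat.strong_induction_on generalizing a with
  | _ n ih =>
  by_cases ha : P a
  · exact ⟨a, .refl, ha⟩
  obtain ⟨b, hab, hlt⟩ := hstep a ha
  obtain ⟨c, hbc, hc⟩ := ih _ (hn ▸ hlt) b rfl
  exact ⟨c, .head hab hbc, hc⟩

section Steps

variable {G H K : RGraph NodeLab Unit}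

structure StepInvariants (G H : RGraph NodeLab Unit) : Prop where
  treeInv : TreeInv G → TreeInv H
  isTree_iff : IsTree G ↔ IsTree H
  measure_lt : terminationMeasure H < terminationMeasure G

theorem StepInvariants.of_iso (h : StepInvariants G K) (φ : Iso K H) : StepInvariants G H :=
  ⟨fun hI => φ.treeInv (h.treeInv hI), h.isTree_iff.trans ⟨φ.isTree, φ.symm.isTree⟩,
    φ.terminationMeasure_eq ▸ h.measure_lt⟩

theorem pruneRule.stepInvariants {l : Fin 2 → Option NodeLab} (hd : (pruneRule l).Deriv G H) :
    StepInvariants G H := by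
  obtain ⟨g, h, ⟨φ⟩⟩ := hd
  obtain ⟨ψ⟩ := nonempty_iso_result h
  have huv : g.fV 0 ≠ g.fV 1 := fun huv => zero_ne_one (h.1.1 huv)
  refine StepInvariants.of_iso ⟨fun hI => treeInv_prune hI (g.src ()).symm huv ?_,
    (isTree_prune_iff (g.src ()).symm (g.tgt ()).symm huv).symm, terminationMeasure_prune_lt⟩
    (ψ.trans φ)
  exact g.rootedness 1 true rfl

theorem r2.stepInvariants (hd : r2.Deriv G H) : StepInvariants G H := by
  obtain ⟨g, h, ⟨φ⟩⟩ := hd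
  obtain ⟨ψ⟩ := nonempty_iso_result h
  have huv : g.fV (0 : Fin 2) ≠ g.fV (1 : Fin 2) :=
    fun huv => zero_ne_one (α := Fin 2) (h.1.1 huv)
  refine StepInvariants.of_iso
    ⟨fun hI => treeInv_reroot hI (g.src ()).symm (g.tgt ()).symm huv ?_,
      isTree_reroot_iff.symm, terminationMeasure_reroot_lt ?_ ?_⟩ (ψ.trans φ)
  exacts [g.rootedness (0 : Fin 2) true rfl, g.nodeLabel (0 : Fin 2) .square rfl,
    g.nodeLabel (1 : Fin 2) .square rfl]

theorem GTStep.stepInvariants (h : GTStep TreeRules G H) : StepInvariants G H := by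
  obtain ⟨r, hr, hd⟩ := h
  rcases hr with rfl | rfl | rfl
  · exact pruneRule.stepInvariants (r0_eq_pruneRule ▸ hd)
  · exact pruneRule.stepInvariants (r1_eq_pruneRule ▸ hd)
  · exact r2.stepInvariants hd

theorem GTDerivStar.treeInv_and_isTree_iff (h : GTDerivStar TreeRules G H) (hI : TreeInv G) :
    TreeInv H ∧ (IsTree G ↔ IsTree H) := by
  rcases h with h | ⟨⟨φ⟩⟩
  · induction h with
    | refl => exact ⟨hI, Iff.rfl⟩
    | tail _ hstep ih =>
      exact ⟨hstep.stepInvariants.treeInv ih.1, ih.2.trans hstep.stepInvariants.isTree_iff⟩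
  · exact ⟨φ.treeInv hI, ⟨φ.isTree, φ.symm.isTree⟩⟩

theorem exists_normalForm (G : RGraph NodeLab Unit) :
    ∃ H, Relation.ReflTransGen (GTStep TreeRules) G H ∧ InNormalForm TreeRules H := by
  refine exists_reflTransGen_of_measure terminationMeasure (fun G hG => ?_) G
  obtain ⟨r, hr, g, h⟩ := not_not.mp hG
  have hstep : GTStep TreeRules G (r.result G g h) := ⟨r, hr, g, h, ⟨Iso.refl _⟩⟩
  exact ⟨_, hstep, hstep.stepInvariants.measure_lt⟩

end Steps

section NormalForms

variable {H : RGraph NodeLab Unit}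

theorem TreeInv.l_eq_square_or_tri (hI : TreeInv H) (x : H.V) :
    H.l x = some .square ∨ H.l x = some .tri := by
  obtain ⟨_ | _, hx⟩ := Option.isSome_iff_exists.mp (hI.labelled x)
  exacts [.inl hx, .inr hx]

theorem TreeInv.p_eq_some_false (hI : TreeInv H) {r x : H.V} (hr : H.p r = some true)
    (hx : x ≠ r) : H.p x = some false := by
  obtain ⟨_ | _, hb⟩ := Option.isSome_iff_exists.mp (hI.rooted x)
  · exact hb
  · obtain ⟨r', -, hr'⟩ := hI.existsUnique_root
    exact absurd ((hr' x hb).trans (hr' r hr).symm) hx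

variable (hI : TreeInv H) (hT : IsTree H) (hnf : InNormalForm TreeRules H)
include hI hT hnf

/-- Otherwise `r2` applies, or the `△`-child closes a directed cycle through the root. -/
theorem TreeInv.root_ne_src {r : H.V} (hr : H.p r = some true) (e : H.E) : H.s e ≠ r := by
  intro hse
  rcases hI.l_eq_square_or_tri (H.t e) with hsq | htri
  · refine hnf ⟨r2, by simp [TreeRules], r2.exists_applicable (hT.src_ne_tgt e)
      (hse ▸ hI.root_square r hr) hsq (hse ▸ hr) (hI.p_eq_some_false hr ?_)⟩
    exact hse ▸ (hT.src_ne_tgt e).symm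
  · obtain ⟨c, w, -, hc, hw⟩ := hI.tri_reaches_root _ htri
    obtain ⟨r', -, hr'⟩ := hI.existsUnique_root
    have hwr : w = H.s e := ((hr' w hw).trans (hr' r hr).symm).trans hse.symm
    have hcycle : IsDirWalk H (H.s e) (e :: c) (H.s e) := ⟨rfl, hwr ▸ hc⟩
    exact List.cons_ne_nil e c (hcycle.eq_nil_of_closed hT.2.2.1)

/-- Otherwise the root is a leaf below its parent, and `r0` or `r1` applies. -/
theorem TreeInv.root_ne_tgt {r : H.V} (hr : H.p r = some true) (e : H.E) : H.t e ≠ r := by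
  intro hte
  have hsr : H.s e ≠ r := hI.root_ne_src hT hnf hr e
  have hleaf : H.SoleEdgeAt (H.t e) e := by
    refine fun e' he' => ⟨hte ▸ hI.root_ne_src hT hnf hr e', fun hte' => he' ?_⟩
    have := Finite.card_le_one_iff_subsingleton.mp (hT.2.2.2 r)
    exact congrArg Subtype.val
      (Subsingleton.elim (α := {e // H.t e = r}) ⟨e', hte ▸ hte'⟩ ⟨e, hte⟩)
  have hp₀ := hI.p_eq_some_false hr hsr
  rcases hI.l_eq_square_or_tri (H.s e) with hsq | htri
  · exact hnf ⟨r0, by simp [TreeRules], r0_eq_pruneRule ▸ pruneRule.exists_applicable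
      (hT.src_ne_tgt e) hleaf hsq (hte ▸ hI.root_square r hr) hp₀ (hte ▸ hr)⟩
  · exact hnf ⟨r1, by simp [TreeRules], r1_eq_pruneRule ▸ pruneRule.exists_applicable
      (hT.src_ne_tgt e) hleaf htri (hte ▸ hI.root_square r hr) hp₀ (hte ▸ hr)⟩

theorem TreeInv.nonempty_iso_singleRootGraph : Nonempty (Iso H singleRootGraph) := by
  obtain ⟨r, hr, -⟩ := hI.existsUnique_root
  have hall : ∀ x, x = r := by
    intro x
    obtain ⟨_ | ⟨⟨e, _ | _⟩, c⟩, hc⟩ := hT.2.1 r x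
    exacts [hc.symm, absurd hc.1 (hI.root_ne_tgt hT hnf hr e),
      absurd hc.1 (hI.root_ne_src hT hnf hr e)]
  have : IsEmpty H.E := ⟨fun e => hI.root_ne_src hT hnf hr e (hall _)⟩
  refine ⟨Iso.ofEquiv ⟨fun _ => (), fun _ => r, fun x => (hall x).symm, fun _ => rfl⟩
    (Equiv.equivPEmpty H.E) isEmptyElim isEmptyElim isEmptyElim (fun x => ?_) (fun x => ?_)⟩
  · rw [hall x, hI.root_square r hr]
  · rw [hall x, hr]

end NormalForms

theorem isTree_singleRootGraph : IsTree singleRootGraph := by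
  refine ⟨⟨()⟩, fun _ _ => ⟨[], rfl⟩, ?_, fun _ => ?_⟩
  · rintro ⟨_, _ | ⟨⟨e, _⟩, _⟩, hne, -⟩
    exacts [hne rfl, e.elim]
  · simp

/-- **Tree Recognition**: every input graph `G` has a normal form, and any
normal form `H` of `G` is isomorphic to the single rooted `□`-labelled node
iff `G` is a tree. -/
theorem tree_recognition (G : RGraph NodeLab Unit) (hG : IsInputGraph G) :
    (∃ H, GTDerivStar TreeRules G H ∧ InNormalForm TreeRules H) ∧
    (∀ H, GTDerivStar TreeRules G H → InNormalForm TreeRules H →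
      (Nonempty (Iso H singleRootGraph) ↔ IsTree G)) := by
  refine ⟨?_, fun H hGH hnf => ?_⟩
  · obtain ⟨H, hGH, hnf⟩ := exists_normalForm G
    exact ⟨H, .inl hGH, hnf⟩
  obtain ⟨hI, htree⟩ := hGH.treeInv_and_isTree_iff hG.treeInv
  rw [htree]
  exact ⟨fun ⟨φ⟩ => φ.symm.isTree isTree_singleRootGraph,
    fun hT => hI.nonempty_iso_singleRootGraph hT hnf⟩
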